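/- Let f be a real binary form of degree n ≥ 2 and let φ: S¹ → ℝ² be defined by φ(cos θ, sin θ) = (f_x, f_y) evaluated at (cos θ, sin θ). Then det(φ, φ_θ) = H(f)/(n−1), where φ_θ is the derivative of φ with respect to θ and H(f) = f_xx·f_yy − f_xy² is the Hessian determinant of f. -/

import Mathlib

open MvPolynomial
/-- The Hessian determinant `f_xx f_yy - f_xy ^ 2` of a binary form. -/
noncomputable def hess (f : MvPolynomial (Fin 2) ℝ) : MvPolynomial (Fin 2) ℝ :=
  pderiv 0 (pderiv 0 f) * pderiv 1 (pderiv 1 f) - (pderiv 0 (pderiv 1 f)) ^ 2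

/-!
On the unit circle `d/dθ` is the rotation field `x ∂_y - y ∂_x`. Euler's identity for `f_x` and
`f_y`, which are homogeneous of degree `n - 1`, turns `(n - 1) det(∇f, (x ∂_y - y ∂_x) ∇f)` into
`(x² + y²) H(f)`, and `x² + y² = 1` on the circle.
-/

namespace MvPolynomial

theorem pderiv_pderiv_comm {σ R : Type*} [CommSemiring R] (i j : σ) (p : MvPolynomial σ R) :
    pderiv i (pderiv j p) = pderiv j (pderiv i p) := by
  classical
  induction p using MvPolynomial.induction_on with
  | C a => simp only [pderiv_C, map_zero]
  | add p q hp hq => simp only [map_add, hp, hq]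
  | mul_X p k hp =>
    have hX : ∀ a b, pderiv a (pderiv b (X k : MvPolynomial σ R)) = 0 := fun a b => by
      rw [pderiv_X, Pi.single_apply, apply_ite (pderiv a), pderiv_one, map_zero, ite_self]
    simp only [pderiv_mul, map_add, hp, hX]
    ring

theorem hasDerivAt_eval_comp {σ : Type*} [Fintype σ] (p : MvPolynomial σ ℝ) {γ : ℝ → σ → ℝ}
    {γ' : σ → ℝ} {t : ℝ} (hγ : ∀ i, HasDerivAt (fun t => γ t i) (γ' i) t) :
    HasDerivAt (fun t => eval (γ t) p) (∑ i, eval (γ t) (pderiv i p) * γ' i) t := by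
  classical
  induction p using MvPolynomial.induction_on with
  | C a => simpa only [eval_C, pderiv_C, map_zero, zero_mul, Finset.sum_const_zero]
      using hasDerivAt_const t a
  | add p q hp hq =>
    simp only [map_add, add_mul, Finset.sum_add_distrib]
    exact hp.add hq
  | mul_X p k hp =>
    simp only [eval_mul, eval_X, pderiv_mul, pderiv_X, map_add, add_mul, Finset.sum_add_distrib]
    refine (hp.mul (hγ k)).congr_deriv ?_
    simp [Pi.single_apply, Finset.sum_mul, mul_right_comm]

noncomputable def angularDeriv {R : Type*} [CommRing R] (p : MvPolynomial (Fin 2) R) :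
    MvPolynomial (Fin 2) R :=
  X 0 * pderiv 1 p - X 1 * pderiv 0 p

theorem hasDerivAt_eval_circle (p : MvPolynomial (Fin 2) ℝ) (θ : ℝ) :
    HasDerivAt (fun θ => eval ![Real.cos θ, Real.sin θ] p)
      (eval ![Real.cos θ, Real.sin θ] (angularDeriv p)) θ := by
  have hγ : ∀ i, HasDerivAt (fun θ => ![Real.cos θ, Real.sin θ] i)
      (![-Real.sin θ, Real.cos θ] i) θ := by
    simpa [Fin.forall_fin_two] using ⟨Real.hasDerivAt_cos θ, Real.hasDerivAt_sin θ⟩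
  convert hasDerivAt_eval_comp p hγ using 1
  simp [angularDeriv, Fin.sum_univ_two]
  ring

theorem IsHomogeneous.sq_add_sq_mul_hess {f : MvPolynomial (Fin 2) ℝ} {n : ℕ}
    (hf : f.IsHomogeneous n) :
    (X 0 ^ 2 + X 1 ^ 2) * hess f = ((n - 1 : ℕ) : MvPolynomial (Fin 2) ℝ) *
      (pderiv 0 f * angularDeriv (pderiv 1 f) - pderiv 1 f * angularDeriv (pderiv 0 f)) := by
  have euler (i : Fin 2) := (hf.pderiv (i := i)).sum_X_mul_pderiv
  simp only [Fin.sum_univ_two, nsmul_eq_mul] at euler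
  have hcomm := pderiv_pderiv_comm 0 1 f
  unfold hess angularDeriv
  linear_combination (X 0 * pderiv 1 (pderiv 1 f) - X 1 * pderiv 0 (pderiv 1 f)) * euler 0
    - (X 0 * pderiv 1 (pderiv 0 f) - X 1 * pderiv 0 (pderiv 0 f)) * euler 1
    - (X 0 ^ 2 + X 1 ^ 2) * pderiv 0 (pderiv 1 f) * hcomm

end MvPolynomial

theorem stmt_4 (n : ℕ) (hn : 2 ≤ n) (f : MvPolynomial (Fin 2) ℝ)
    (hhom : f.IsHomogeneous n)
    (a b : ℝ → ℝ)
    (ha : ∀ θ, a θ = eval ![Real.cos θ, Real.sin θ] (pderiv 0 f))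
    (hb : ∀ θ, b θ = eval ![Real.cos θ, Real.sin θ] (pderiv 1 f)) :
    ∀ θ, a θ * deriv b θ - b θ * deriv a θ =
      eval ![Real.cos θ, Real.sin θ] (hess f) / ((n : ℝ) - 1) := by
  intro θ
  obtain rfl : a = _ := funext ha
  obtain rfl : b = _ := funext hb
  have key := congrArg (eval ![Real.cos θ, Real.sin θ]) hhom.sq_add_sq_mul_hess
  simp only [map_mul, map_add, map_sub, map_pow, map_natCast, eval_X, Matrix.cons_val_zero,
    Matrix.cons_val_one, Real.cos_sq_add_sin_sq, one_mul, map_one,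
    Nat.cast_pred (by omega : 0 < n)] at key
  have hn' : (n : ℝ) - 1 ≠ 0 := by
    have : (2 : ℝ) ≤ n := by exact_mod_cast hn
    linarith
  rw [(hasDerivAt_eval_circle _ θ).deriv, (hasDerivAt_eval_circle _ θ).deriv, eq_div_iff hn', key]
  ring
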